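/- arXiv:1310.2783 — 2 statements merged into one kernel-verified Lean document; each statement's English description precedes it below -/
import Mathlib

section
/- For every pair of positive integers k, ℓ with k ≥ 3, there exists a positive integer N = N(k,ℓ) such that for every integer n ≥ N, the (k,ℓ)-rainbow index of the complete bipartite graph K_{n,n} satisfies rx_{k,ℓ}(K_{n,n}) ≤ k + 1. -/
open SimpleGraph

/-- `T` is a rainbow `S`-tree in `G` under edge-coloring `c`:
its vertices contain `S`, it is a tree, and `c` is injective on its edges. -/
def IsRainbowSTree {V β : Type*} (G : SimpleGraph V) (c : Sym2 V → β)
    (S : Set V) (T : G.Subgraph) : Prop :=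
  S ⊆ T.verts ∧ T.coe.IsTree ∧ Set.InjOn c T.edgeSet

/-- A family of `S`-trees is internally disjoint: pairwise edge-disjoint, and
the vertex sets of two distinct members meet exactly in `S`. -/
def InternallyDisjoint {V : Type*} {G : SimpleGraph V} (S : Set V)
    {ι : Type*} (T : ι → G.Subgraph) : Prop :=
  ∀ i j, i ≠ j → (T i).edgeSet ∩ (T j).edgeSet = ∅ ∧ (T i).verts ∩ (T j).verts = S

/-- The coloring `c` provides, for every set `S` of `k` vertices,
`ℓ` internally disjoint rainbow `S`-trees. -/
def HasRainbowSTrees {V β : Type*} (G : SimpleGraph V) (c : Sym2 V → β) (k ℓ : ℕ) : Prop :=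
  ∀ S : Finset V, S.card = k →
    ∃ T : Fin ℓ → G.Subgraph,
      (∀ i, IsRainbowSTree G c (S : Set V) (T i)) ∧ InternallyDisjoint (S : Set V) T

/-- The `(k,ℓ)`-rainbow index `rx_{k,ℓ}(G)`: the minimum number `t` of colors such that
some edge-coloring of `G` with `t` colors gives, for every `k`-set `S`,
`ℓ` internally disjoint rainbow `S`-trees. -/
noncomputable def rainbowIndex {V : Type*} (G : SimpleGraph V) (k ℓ : ℕ) : ℕ :=
  sInf {t : ℕ | ∃ c : Sym2 V → Fin t, HasRainbowSTrees G c k ℓ}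

/-!
Colour the edges of `K_{n,n}` with `k + 1` colours. For a `k`-set `S`, choose `n - k` distinct
left vertices `X_t` and distinct right vertices `Y_t` outside `S`; the double star with central
edge `X_t Y_t`, joining `X_t` to the right vertices of `S` and `Y_t` to the left ones, is an
`S`-tree with exactly `k + 1` edges, and these trees are internally disjoint with pairwise disjoint
edge sets. A uniformly random colouring makes each of them rainbow independently with probability
`(k + 1)! / (k + 1) ^ (k + 1)`, so the probability that fewer than `ℓ` are rainbow decays
exponentially in `n`, while there are only polynomially many sets `S`. The argument is carried out
by counting colourings.
-/

open Finset Function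

section Counting

variable {ι C : Type*} [Fintype ι] [DecidableEq ι] [Fintype C]

theorem card_filter_comp_embedding_mul {κ : Type*} [Fintype κ] [DecidableEq κ] (φ : κ ↪ ι)
    (R : (κ → C) → Prop) [DecidablePred R] :
    #{c : ι → C | R (c ∘ φ)} * Fintype.card C ^ Fintype.card κ
      = #{g | R g} * Fintype.card C ^ Fintype.card ι := by
  classical
  let e : (ι → C) ≃ (κ → C) × ({i // i ∉ Set.range φ} → C) :=
    (Equiv.piEquivPiSubtypeProd (· ∈ Set.range φ) fun _ => C).trans <|
      (Equiv.arrowCongr (Equiv.ofInjective φ φ.injective).symm (Equiv.refl C)).prodCongr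
        (Equiv.refl _)
  have hcard :
      #{c : ι → C | R (c ∘ φ)} = #{g | R g} * Fintype.card ({i // i ∉ Set.range φ} → C) := by
    rw [card_equiv e (t := {p | R p.1}) fun c => by simp [e]; rfl, ← univ_product_univ,
      filter_product_left, card_product, card_univ]
  have hfun := Fintype.card_congr e
  rw [Fintype.card_prod, Fintype.card_fun, Fintype.card_fun] at hfun
  rw [hcard, hfun]
  ring

theorem card_filter_not_injective {Γ : Type*} [Fintype Γ] [DecidableEq Γ] [DecidableEq C]
    (h : Fintype.card Γ = Fintype.card C) :
    #{v : Γ → C | ¬Injective v}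
      = Fintype.card C ^ Fintype.card C - (Fintype.card C).factorial := by
  have hinj : #{v : Γ → C | Injective v} = (Fintype.card C).factorial := by
    rw [← Fintype.card_subtype, Fintype.card_congr (Equiv.subtypeInjectiveEquivEmbedding Γ C),
      Fintype.card_embedding_eq, h, Nat.descFactorial_self]
  rw [filter_not, card_sdiff_of_subset (filter_subset _ _), hinj, card_univ, Fintype.card_fun, h]

variable {τ Γ : Type*} [Fintype τ] [DecidableEq τ] [Fintype Γ] [DecidableEq Γ]

theorem card_filter_forall_blocks_mul (e : τ × Γ ↪ ι) (P : (Γ → C) → Prop) [DecidablePred P] :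
    #{c : ι → C | ∀ t, P fun γ => c (e (t, γ))}
        * (Fintype.card C ^ Fintype.card Γ) ^ Fintype.card τ
      = #{v | P v} ^ Fintype.card τ * Fintype.card C ^ Fintype.card ι := by
  have h := card_filter_comp_embedding_mul e fun g => ∀ t, P fun γ => g (t, γ)
  rw [Fintype.card_prod, mul_comm (Fintype.card τ), pow_mul] at h
  refine h.trans ?_
  rw [card_equiv (Equiv.curry τ Γ C) (t := Fintype.piFinset fun _ => {v | P v})
      fun _ => by simp; rfl,
    Fintype.card_piFinset, prod_const, card_univ]

theorem card_filter_le_card_filter_blocks_mul_le (e : τ × Γ ↪ ι) (P : (Γ → C) → Prop)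
    [DecidablePred P] (j : ℕ) :
    #{c : ι → C | j ≤ #{t | P fun γ => c (e (t, γ))}} * (Fintype.card C ^ Fintype.card Γ) ^ j
      ≤ (Fintype.card τ).choose j * #{v | P v} ^ j * Fintype.card C ^ Fintype.card ι := by
  classical
  have hcover : ({c : ι → C | j ≤ #{t | P fun γ => c (e (t, γ))}} : Finset (ι → C)) ⊆
      (powersetCard j univ).biUnion fun T => {c | ∀ t ∈ T, P fun γ => c (e (t, γ))} := by
    intro c hc
    obtain ⟨T, hT, hTcard⟩ := exists_subset_card_eq (mem_filter.1 hc).2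
    exact mem_biUnion.2 ⟨T, mem_powersetCard.2 ⟨subset_univ _, hTcard⟩,
      mem_filter.2 ⟨mem_univ _, fun t ht => (mem_filter.1 (hT ht)).2⟩⟩
  have hblock : ∀ T ∈ powersetCard j (univ : Finset τ),
      #{c : ι → C | ∀ t ∈ T, P fun γ => c (e (t, γ))} * (Fintype.card C ^ Fintype.card Γ) ^ j
        = #{v | P v} ^ j * Fintype.card C ^ Fintype.card ι := by
    intro T hT
    have h := card_filter_forall_blocks_mul
      (((Embedding.subtype (· ∈ T)).prodMap (Embedding.refl Γ)).trans e) P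
    rw [Fintype.card_coe, (mem_powersetCard.1 hT).2] at h
    convert h using 4
    simp
  calc #{c : ι → C | j ≤ #{t | P fun γ => c (e (t, γ))}} * (Fintype.card C ^ Fintype.card Γ) ^ j
      ≤ (∑ T ∈ powersetCard j univ, #{c : ι → C | ∀ t ∈ T, P fun γ => c (e (t, γ))})
          * (Fintype.card C ^ Fintype.card Γ) ^ j :=
        Nat.mul_le_mul_right _ ((card_le_card hcover).trans card_biUnion_le)
    _ = ∑ T ∈ powersetCard j (univ : Finset τ),
          #{v | P v} ^ j * Fintype.card C ^ Fintype.card ι := by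
        rw [sum_mul]
        exact sum_congr rfl hblock
    _ = (Fintype.card τ).choose j * #{v | P v} ^ j * Fintype.card C ^ Fintype.card ι := by
        rw [sum_const, card_powersetCard, card_univ, smul_eq_mul, mul_assoc]

end Counting

theorem exists_forall_of_sum_card_filter_not_lt {σ A : Type*} [Fintype A] [DecidableEq A]
    (s : Finset σ) (P : σ → A → Prop) [∀ i, DecidablePred (P i)]
    (h : ∑ i ∈ s, #{a | ¬P i a} < Fintype.card A) : ∃ a, ∀ i ∈ s, P i a := by
  by_contra! hall
  have hcover : (univ : Finset A) ⊆ s.biUnion fun i => {a | ¬P i a} := fun a _ => by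
    obtain ⟨i, hi, hP⟩ := hall a
    exact mem_biUnion.2 ⟨i, hi, mem_filter.2 ⟨mem_univ a, hP⟩⟩
  exact ((card_le_card hcover).trans card_biUnion_le).not_gt (card_univ (α := A) ▸ h)

theorem exists_embedding_fin_forall_notMem {α : Type*} [Fintype α] [DecidableEq α] (s : Finset α)
    {m : ℕ} (h : m + #s ≤ Fintype.card α) : ∃ f : Fin m ↪ α, ∀ i, f i ∉ s := by
  obtain ⟨f⟩ := Function.Embedding.nonempty_of_card_le (α := Fin m) (β := ↥sᶜ) <| by
    rw [Fintype.card_fin, Fintype.card_coe, card_compl]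
    omega
  exact ⟨f.trans (Embedding.subtype _), fun i => mem_compl.1 (f i).2⟩

namespace SimpleGraph

theorem isAcyclic_of_neighborSet_subsingleton {V : Type*} {G : SimpleGraph V}
    (x y : V) (h : ∀ z, z ≠ x → z ≠ y → (G.neighborSet z).Subsingleton) : G.IsAcyclic := by
  classical
  intro v c hc
  -- a cycle visits at least three distinct vertices, and each has two neighbours on the cycle
  obtain ⟨z, hz, hzx, hzy⟩ : ∃ z ∈ c.support.tail, z ≠ x ∧ z ≠ y := by
    by_contra! hall
    have hsub : c.support.tail.toFinset ⊆ {x, y} := fun z hz =>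
      mem_insert.2 <| (em (z = x)).imp id fun hzx =>
        mem_singleton.2 (hall z (List.mem_toFinset.1 hz) hzx)
    have := (card_le_card hsub).trans card_le_two
    rw [List.toFinset_card_of_nodup hc.support_nodup, List.length_tail, Walk.length_support] at this
    have := hc.three_le_length
    omega
  have htwo := hc.ncard_neighborSet_toSubgraph_eq_two (List.mem_of_mem_tail hz)
  have hsub := (h z hzx hzy).anti (c.toSubgraph.neighborSet_subset z)
  have := (Set.ncard_le_one_iff hsub.finite).2 fun ha hb => hsub ha hb
  omega

variable {V : Type*} (G : SimpleGraph V)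

def hubSubgraph (H S : Set V) : G.Subgraph where
  verts := H ∪ S
  Adj u v := G.Adj u v ∧ (u ∈ H ∧ v ∈ H ∪ S ∨ v ∈ H ∧ u ∈ H ∪ S)
  adj_sub h := h.1
  edge_vert h := h.2.elim (fun h => Or.inl h.1) (fun h => h.2)
  symm := ⟨fun _ _ h => ⟨h.1.symm, h.2.symm⟩⟩

variable {G} {H S : Set V}

theorem hubSubgraph_verts : (G.hubSubgraph H S).verts = H ∪ S := rfl

theorem mem_of_hubSubgraph_adj {u v : V} (h : (G.hubSubgraph H S).Adj u v) (hu : u ∉ H) :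
    v ∈ H ∧ G.Adj u v :=
  ⟨(h.2.resolve_left fun h' => hu h'.1).1, h.1⟩

theorem hubSubgraph_connected {x y : V} (hxy : G.Adj x y)
    (hS : ∀ s ∈ S, G.Adj s x ∨ G.Adj s y) : (G.hubSubgraph {x, y} S).coe.Connected := by
  have hx : x ∈ (G.hubSubgraph {x, y} S).verts := by simp [hubSubgraph_verts]
  have hadj : ∀ {a b} (ha : a ∈ ({x, y} : Set V)) (hb : b ∈ (G.hubSubgraph {x, y} S).verts),
      G.Adj a b → (G.hubSubgraph {x, y} S).coe.Adj ⟨a, Or.inl ha⟩ ⟨b, hb⟩ :=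
    fun ha hb hab => ⟨hab, Or.inl ⟨ha, hb⟩⟩
  have hxy' := hadj (by simp) (by simp [hubSubgraph_verts]) hxy
  refine (connected_iff_exists_forall_reachable _).2 ⟨⟨x, hx⟩, ?_⟩
  rintro ⟨u, (rfl | rfl) | hu⟩
  · rfl
  · exact hxy'.reachable
  · rcases hS u hu with hux | huy
    · exact (hadj (by simp) (Or.inr hu) hux.symm).reachable
    · exact hxy'.reachable.trans (hadj (by simp) (Or.inr hu) huy.symm).reachable

theorem hubSubgraph_isAcyclic {x y : V} (hS : ∀ s ∈ S, ¬(G.Adj s x ∧ G.Adj s y)) :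
    (G.hubSubgraph {x, y} S).coe.IsAcyclic := by
  refine isAcyclic_of_neighborSet_subsingleton ⟨x, by simp [hubSubgraph_verts]⟩
    ⟨y, by simp [hubSubgraph_verts]⟩ ?_
  rintro ⟨u, hu⟩ hux huy
  intro ⟨a, _⟩ ha ⟨b, _⟩ hb
  have hu' : u ∉ ({x, y} : Set V) := by simpa [Subtype.ext_iff] using And.intro hux huy
  obtain ⟨haH, hua⟩ := mem_of_hubSubgraph_adj ha hu'
  obtain ⟨hbH, hub⟩ := mem_of_hubSubgraph_adj hb hu'
  have := hS u ((hubSubgraph_verts ▸ hu).resolve_left hu')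
  ext
  simp only [Set.mem_insert_iff, Set.mem_singleton_iff] at haH hbH
  rcases haH with rfl | rfl <;> rcases hbH with rfl | rfl <;> simp_all

theorem hubSubgraph_verts_inter {H' : Set V} (hH : Disjoint H H') :
    (G.hubSubgraph H S).verts ∩ (G.hubSubgraph H' S).verts = S := by
  rw [hubSubgraph_verts, hubSubgraph_verts, ← Set.inter_union_distrib_right, hH.inter_eq,
    Set.empty_union]

theorem hubSubgraph_edgeSet_inter {H' : Set V} (hH : Disjoint H H') (hHS : Disjoint H S) :
    (G.hubSubgraph H S).edgeSet ∩ (G.hubSubgraph H' S).edgeSet = ∅ := by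
  refine Set.eq_empty_of_forall_notMem fun e ⟨he, he'⟩ => ?_
  induction e using Sym2.ind with | _ u v => ?_
  have hmem : ∀ {w}, w ∈ H → w ∈ (G.hubSubgraph H' S).verts → False := fun hw hw' =>
    hw'.elim (hH.notMem_of_mem_left hw) (hHS.notMem_of_mem_left hw)
  rcases he.2 with ⟨hu, -⟩ | ⟨hv, -⟩
  · exact hmem hu ((G.hubSubgraph H' S).edge_vert he')
  · exact hmem hv ((G.hubSubgraph H' S).edge_vert he'.symm)

end SimpleGraph

def HasDisjointRainbowSTrees {V C : Type*} (G : SimpleGraph V) (c : Sym2 V → C) (S : Set V)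
    (ℓ : ℕ) : Prop :=
  ∃ T : Fin ℓ → G.Subgraph, (∀ i, IsRainbowSTree G c S (T i)) ∧ InternallyDisjoint S T

section DoubleStar

variable {α β : Type*}

def doubleStar (S : Set (α ⊕ β)) (X : α) (Y : β) : (completeBipartiteGraph α β).Subgraph :=
  (completeBipartiteGraph α β).hubSubgraph {.inl X, .inr Y} S

def doubleStarEdge (S : Finset (α ⊕ β)) (X : α) (Y : β) : Option S → Sym2 (α ⊕ β)
  | none => s(.inl X, .inr Y)
  | some s => s(s, Sum.elim (fun _ => .inr Y) (fun _ => .inl X) s.1)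

theorem doubleStar_isTree (S : Set (α ⊕ β)) (X : α) (Y : β) : (doubleStar S X Y).coe.IsTree :=
  ⟨hubSubgraph_connected (by simp) fun s _ => by cases s <;> simp,
    hubSubgraph_isAcyclic fun s _ => by cases s <;> simp⟩

theorem edgeSet_doubleStar_subset (S : Finset (α ⊕ β)) (X : α) (Y : β) :
    (doubleStar S X Y).edgeSet ⊆ Set.range (doubleStarEdge S X Y) := by
  intro e he
  induction e using Sym2.ind with | _ u v => ?_
  obtain ⟨huv, h⟩ := he
  wlog hu : u ∈ ({.inl X, .inr Y} : Set (α ⊕ β)) ∧ v ∈ ({.inl X, .inr Y} : Set (α ⊕ β)) ∪ S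
    generalizing u v
  · rw [Sym2.eq_swap]
    exact this v u huv.symm h.symm (h.resolve_left hu)
  obtain ⟨rfl | rfl, (rfl | rfl) | hv⟩ := hu
  · simp at huv
  · exact ⟨none, rfl⟩
  · cases v with
    | inl => simp at huv
    | inr => exact ⟨some ⟨_, hv⟩, Sym2.eq_swap⟩
  · exact ⟨none, Sym2.eq_swap⟩
  · simp at huv
  · cases v with
    | inl => exact ⟨some ⟨_, hv⟩, Sym2.eq_swap⟩
    | inr => simp at huv

theorem doubleStarEdge_injective {τ : Type*} {S : Finset (α ⊕ β)} {X : τ → α} {Y : τ → β}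
    (hX : Injective X) (hY : Injective Y) (hXS : ∀ t, .inl (X t) ∉ S)
    (hYS : ∀ t, .inr (Y t) ∉ S) :
    Injective fun p : τ × Option S => doubleStarEdge S (X p.1) (Y p.1) p.2 := by
  rintro ⟨t, _ | ⟨s | s, hs⟩⟩ ⟨t', _ | ⟨s' | s', hs'⟩⟩ h <;>
    simp only [doubleStarEdge, Sym2.eq_iff, Sum.elim_inl, Sum.elim_inr, Sum.inl.injEq,
      Sum.inr.injEq, reduceCtorEq, and_false, false_or, or_false] at h
  all_goals aesop (add simp [hX.eq_iff, hY.eq_iff])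

theorem isRainbowSTree_doubleStar {C : Type*} {c : Sym2 (α ⊕ β) → C} {S : Finset (α ⊕ β)}
    {X : α} {Y : β} (hc : Injective (c ∘ doubleStarEdge S X Y)) :
    IsRainbowSTree (completeBipartiteGraph α β) c S (doubleStar S X Y) :=
  ⟨Set.subset_union_right, doubleStar_isTree S X Y,
    hc.injOn_range.mono (edgeSet_doubleStar_subset S X Y)⟩

theorem internallyDisjoint_doubleStar {ι : Type*} {S : Set (α ⊕ β)} {X : ι → α} {Y : ι → β}
    (hX : Injective X) (hY : Injective Y) (hXS : ∀ i, .inl (X i) ∉ S)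
    (hYS : ∀ i, .inr (Y i) ∉ S) :
    InternallyDisjoint S fun i => doubleStar S (X i) (Y i) := by
  intro i j hij
  have hdisj : Disjoint ({.inl (X i), .inr (Y i)} : Set (α ⊕ β)) {.inl (X j), .inr (Y j)} := by
    simp [(hX.ne hij).symm, (hY.ne hij).symm]
  exact ⟨hubSubgraph_edgeSet_inter hdisj (by simp [hXS, hYS]), hubSubgraph_verts_inter hdisj⟩

theorem hasDisjointRainbowSTrees_of_le_card_filter [DecidableEq α] [DecidableEq β] {C : Type*}
    [DecidableEq C] (c : Sym2 (α ⊕ β) → C) {S : Finset (α ⊕ β)} {m ℓ : ℕ} {X : Fin m → α}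
    {Y : Fin m → β} (hX : Injective X) (hY : Injective Y) (hXS : ∀ t, .inl (X t) ∉ S)
    (hYS : ∀ t, .inr (Y t) ∉ S)
    (hℓ : ℓ ≤ #{t | Injective (c ∘ doubleStarEdge S (X t) (Y t))}) :
    HasDisjointRainbowSTrees (completeBipartiteGraph α β) c S ℓ := by
  let σ := orderEmbOfCardLe _ hℓ
  have hσ : ∀ i, Injective (c ∘ doubleStarEdge S (X (σ i)) (Y (σ i))) := fun i =>
    (mem_filter.1 (orderEmbOfCardLe_mem _ hℓ i)).2
  exact ⟨fun i => doubleStar S (X (σ i)) (Y (σ i)), fun i => isRainbowSTree_doubleStar (hσ i),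
    internallyDisjoint_doubleStar (hX.comp σ.injective) (hY.comp σ.injective)
      (fun _ => hXS _) (fun _ => hYS _)⟩

end DoubleStar

section RainbowColorings

variable {α β : Type*} [Fintype α] [Fintype β] [DecidableEq α] [DecidableEq β] {k m : ℕ}

open Classical in
theorem card_filter_not_hasDisjointRainbowSTrees_mul_le (ℓ : ℕ) {S : Finset (α ⊕ β)}
    (hS : #S = k) (hα : m + k ≤ Fintype.card α) (hβ : m + k ≤ Fintype.card β) :
    #{c : Sym2 (α ⊕ β) → Fin (k + 1) |
        ¬HasDisjointRainbowSTrees (completeBipartiteGraph α β) c S ℓ}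
        * ((k + 1) ^ (k + 1)) ^ (m - (ℓ - 1))
      ≤ m.choose (m - (ℓ - 1)) * ((k + 1) ^ (k + 1) - (k + 1).factorial) ^ (m - (ℓ - 1))
        * (k + 1) ^ Fintype.card (Sym2 (α ⊕ β)) := by
  obtain ⟨X, hXS⟩ := exists_embedding_fin_forall_notMem S.toLeft (m := m) <| by
    have := card_toLeft_le (u := S); omega
  obtain ⟨Y, hYS⟩ := exists_embedding_fin_forall_notMem S.toRight (m := m) <| by
    have := card_toRight_le (u := S); omega
  have hXS' : ∀ t, .inl (X t) ∉ S := fun t => by simpa using hXS t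
  have hYS' : ∀ t, .inr (Y t) ∉ S := fun t => by simpa using hYS t
  let e : Fin m × Option S ↪ Sym2 (α ⊕ β) :=
    ⟨_, doubleStarEdge_injective X.injective Y.injective hXS' hYS'⟩
  have hΓ : Fintype.card (Option S) = Fintype.card (Fin (k + 1)) := by simp [hS]
  have hcount := card_filter_le_card_filter_blocks_mul_le (C := Fin (k + 1)) e
    (fun v => ¬Injective v) (m - (ℓ - 1))
  rw [card_filter_not_injective hΓ, hΓ, Fintype.card_fin, Fintype.card_fin] at hcount
  refine le_trans (Nat.mul_le_mul_right _ (card_le_card fun c hc => ?_)) hcount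
  refine mem_filter.2 ⟨mem_univ _, ?_⟩
  by_contra! hlt
  refine (mem_filter.1 hc).2
    (hasDisjointRainbowSTrees_of_le_card_filter c X.injective Y.injective hXS' hYS' ?_)
  have := card_filter_add_card_filter_not (s := univ)
    (fun t : Fin m => Injective fun γ => c (e (t, γ)))
  rw [card_univ, Fintype.card_fin] at this
  exact (by omega : ℓ ≤ #{t | Injective fun γ => c (e (t, γ))})

theorem exists_hasRainbowSTrees_completeBipartiteGraph (ℓ : ℕ) (hα : m + k ≤ Fintype.card α)
    (hβ : m + k ≤ Fintype.card β)
    (hcount : (Fintype.card α + Fintype.card β).choose k * m.choose (m - (ℓ - 1))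
        * ((k + 1) ^ (k + 1) - (k + 1).factorial) ^ (m - (ℓ - 1))
      < ((k + 1) ^ (k + 1)) ^ (m - (ℓ - 1))) :
    ∃ c : Sym2 (α ⊕ β) → Fin (k + 1), HasRainbowSTrees (completeBipartiteGraph α β) c k ℓ := by
  classical
  obtain ⟨c, hc⟩ := exists_forall_of_sum_card_filter_not_lt (powersetCard k univ)
    (fun (S : Finset (α ⊕ β)) c =>
      HasDisjointRainbowSTrees (completeBipartiteGraph α β) c (S : Set (α ⊕ β)) ℓ) <| by
    refine Nat.lt_of_mul_lt_mul_right (a := ((k + 1) ^ (k + 1)) ^ (m - (ℓ - 1))) ?_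
    rw [sum_mul]
    calc _ ≤ ∑ _S ∈ powersetCard k (univ : Finset (α ⊕ β)),
          m.choose (m - (ℓ - 1)) * ((k + 1) ^ (k + 1) - (k + 1).factorial) ^ (m - (ℓ - 1))
            * (k + 1) ^ Fintype.card (Sym2 (α ⊕ β)) :=
          sum_le_sum fun S hS => card_filter_not_hasDisjointRainbowSTrees_mul_le ℓ
            (mem_powersetCard_univ.1 hS) hα hβ
      _ = (Fintype.card α + Fintype.card β).choose k * m.choose (m - (ℓ - 1))
            * ((k + 1) ^ (k + 1) - (k + 1).factorial) ^ (m - (ℓ - 1))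
            * (k + 1) ^ Fintype.card (Sym2 (α ⊕ β)) := by
          rw [sum_const, card_powersetCard, card_univ, Fintype.card_sum, smul_eq_mul]
          ring
      _ < _ := by
          rw [Fintype.card_fun, Fintype.card_fin, mul_comm (_ ^ Fintype.card _)]
          exact Nat.mul_lt_mul_of_pos_right hcount (by positivity)
  exact ⟨c, fun S hS => hc S (mem_powersetCard_univ.2 hS)⟩

end RainbowColorings

open Filter Topology in
theorem eventually_mul_pow_mul_pow_sub_lt {b Q : ℕ} (hbQ : b < Q) (A K c : ℕ) :
    ∀ᶠ n in atTop, A * n ^ K * b ^ (n - c) < Q ^ (n - c) := by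
  have hQ : (0 : ℝ) < Q := by exact_mod_cast (Nat.zero_le b).trans_lt hbQ
  have hr : (b / Q : ℝ) < 1 := (div_lt_one hQ).2 (by exact_mod_cast hbQ)
  have hlim : Tendsto
      (fun n : ℕ => (A * 2 ^ K : ℝ) * (((n - c : ℕ) : ℝ) ^ K * (b / Q : ℝ) ^ (n - c))) atTop (𝓝 0) := by
    simpa using ((tendsto_pow_const_mul_const_pow_of_lt_one K (by positivity) hr).comp
      (tendsto_sub_atTop_nat c)).const_mul (A * 2 ^ K : ℝ)
  filter_upwards [hlim.eventually_lt_const zero_lt_one, eventually_ge_atTop (2 * c)] with n hn hnc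
  have hdouble : n ^ K ≤ 2 ^ K * (n - c) ^ K := by
    rw [← mul_pow]
    exact Nat.pow_le_pow_left (by omega) K
  rw [← Nat.cast_lt (α := ℝ)]
  calc ((A * n ^ K * b ^ (n - c) : ℕ) : ℝ)
      ≤ A * (2 ^ K * ((n - c : ℕ) : ℝ) ^ K) * (b : ℝ) ^ (n - c) := by
        push_cast
        gcongr
        exact_mod_cast hdouble
    _ = (A * 2 ^ K : ℝ) * (((n - c : ℕ) : ℝ) ^ K * (b / Q : ℝ) ^ (n - c)) * (Q : ℝ) ^ (n - c) := by
        rw [div_pow]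
        field_simp
    _ < 1 * (Q : ℝ) ^ (n - c) := by gcongr
    _ = ((Q ^ (n - c) : ℕ) : ℝ) := by push_cast; ring

open Filter in
theorem eventually_choose_mul_pow_lt (k ℓ : ℕ) {b Q : ℕ} (hbQ : b < Q) :
    ∀ᶠ n in atTop, (n + n).choose k * (n - k).choose (n - k - (ℓ - 1)) * b ^ (n - k - (ℓ - 1))
      < Q ^ (n - k - (ℓ - 1)) := by
  filter_upwards [eventually_mul_pow_mul_pow_sub_lt hbQ (2 ^ k) (k + (ℓ - 1)) (k + (ℓ - 1)),
    eventually_ge_atTop (k + (ℓ - 1))] with n hn hn'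
  rw [← Nat.sub_sub] at hn
  refine lt_of_le_of_lt (Nat.mul_le_mul_right _ ?_) hn
  calc (n + n).choose k * (n - k).choose (n - k - (ℓ - 1))
      ≤ (n + n) ^ k * n ^ (ℓ - 1) := by
        refine Nat.mul_le_mul (Nat.choose_le_pow _ _) ?_
        rw [Nat.choose_symm (by omega)]
        exact (Nat.choose_le_pow _ _).trans (Nat.pow_le_pow_left (Nat.sub_le n k) _)
    _ = 2 ^ k * n ^ (k + (ℓ - 1)) := by ring

theorem rx_Knn_le_succ_general (k ℓ : ℕ) :
    ∃ N : ℕ, 0 < N ∧ ∀ n : ℕ, N ≤ n →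
      rainbowIndex (completeBipartiteGraph (Fin n) (Fin n)) k ℓ ≤ k + 1 := by
  have hb : (k + 1) ^ (k + 1) - (k + 1).factorial < (k + 1) ^ (k + 1) :=
    Nat.sub_lt (by positivity) (Nat.factorial_pos _)
  obtain ⟨N, hN⟩ := ((eventually_choose_mul_pow_lt k ℓ hb).and
    (Filter.eventually_ge_atTop k)).exists_forall_of_atTop
  refine ⟨N + 1, N.succ_pos, fun n hn => Nat.sInf_le ?_⟩
  obtain ⟨hcount, hkn⟩ := hN n (by omega)
  exact exists_hasRainbowSTrees_completeBipartiteGraph (m := n - k) ℓ (by simp; omega)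
    (by simp; omega) (by simpa using hcount)

theorem rx_Knn_le_succ (k ℓ : ℕ) (hk : 3 ≤ k) (hℓ : 1 ≤ ℓ) :
    ∃ N : ℕ, 0 < N ∧ ∀ n : ℕ, N ≤ n →
      rainbowIndex (completeBipartiteGraph (Fin n) (Fin n)) k ℓ ≤ k + 1 :=
  rx_Knn_le_succ_general k ℓ
end

section
/- For every triple of positive integers k, ℓ, r with 3 ≤ k < r, there exists a positive integer N = N(k,ℓ,r) such that for every integer n ≥ N, rx_{k,ℓ}(K_{r×n}) = k. -/
open SimpleGraph

/-!
Fewer than `k` colours cannot work: a rainbow tree then has at most `k` vertices, so a rainbow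
tree through `k` vertices of one part would have to be spanned by that independent part.

For `k` colours, every index `b < n` carries a hash label, read off the odd part of `b`; the colour
of `uv` is the hash of `v` under the label of `u` plus the hash of `u` under the label of `v`.
Given a `k`-set `S`, pick a part `p` that `S` misses. A vertex `x` of part `p` whose binary digits
vanish at the `≤ k³` positions read by the labels of `S` receives from each `v ∈ S` a hash that
depends on `v` alone; if the label of `x` compensates for these on `S`, then `x` is the centre of a
rainbow star spanning `S`. There are only polylogarithmically many labels in `n`, so `ℓ` such
centres fit into a window of bits below `log₂ n` that avoids those positions.
-/

namespace IsRainbowSTree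

variable {V : Type*} {G : SimpleGraph V} {t : ℕ} {c : Sym2 V → Fin t} {S : Set V}
  {T : G.Subgraph}

lemma ncard_edgeSet_le (hT : IsRainbowSTree G c S T) : T.edgeSet.ncard ≤ t := by
  simpa using Set.ncard_le_ncard_of_injOn c (fun _ _ => Set.mem_univ _) hT.2.2

lemma ncard_verts_le [Finite V] (hT : IsRainbowSTree G c S T) : T.verts.ncard ≤ t + 1 := by
  have hcard := (isTree_iff_connected_and_card.1 hT.2.1).2
  have hedges := hT.ncard_edgeSet_le
  rw [← Subgraph.image_coe_edgeSet_coe,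
    Set.ncard_image_of_injective _ (Sym2.map.injective Subtype.val_injective)] at hedges
  rw [Nat.card_coe_set_eq, Nat.card_coe_set_eq] at hcard
  omega

end IsRainbowSTree

lemma not_hasRainbowSTrees_of_isIndepSet {V : Type*} [Finite V] {G : SimpleGraph V}
    {t k ℓ : ℕ} (c : Sym2 V → Fin t) (htk : t < k) (hℓ : 0 < ℓ) {S : Finset V}
    (hS : S.card = k) (hk : 2 ≤ k) (hindep : G.IsIndepSet S) : ¬ HasRainbowSTrees G c k ℓ := by
  intro h
  obtain ⟨T, hT, -⟩ := h S hS
  set T₀ := T ⟨0, hℓ⟩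
  have hT₀ : IsRainbowSTree G c S T₀ := hT _
  have hverts : T₀.verts = S :=
    (Set.eq_of_subset_of_ncard_le hT₀.1 (by simpa [hS] using hT₀.ncard_verts_le.trans htk)).symm
  have : Nontrivial T₀.verts := by
    rw [hverts, Set.nontrivial_coe_sort]
    exact Finset.one_lt_card_iff_nontrivial.1 (by omega)
  have hconn : T₀.Preconnected := Subgraph.preconnected_iff.2 hT₀.2.1.connected.preconnected
  obtain ⟨⟨a, ha⟩⟩ := (inferInstance : Nonempty T₀.verts)
  obtain ⟨b, hab⟩ := hconn.exists_adj_of_nontrivial ⟨a, ha⟩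
  have hb := T₀.edge_vert hab.symm
  rw [hverts] at ha hb
  exact hindep ha hb (T₀.adj_sub hab).ne (T₀.adj_sub hab)

lemma rainbowIndex_eq_of_hasRainbowSTrees {V : Type*} {G : SimpleGraph V} {k ℓ t : ℕ}
    {c : Sym2 V → Fin t} (hc : HasRainbowSTrees G c k ℓ)
    (hmin : ∀ s < t, ∀ c' : Sym2 V → Fin s, ¬ HasRainbowSTrees G c' k ℓ) :
    rainbowIndex G k ℓ = t :=
  le_antisymm (Nat.sInf_le ⟨c, hc⟩)
    (le_csInf ⟨t, c, hc⟩ fun s ⟨c', hc'⟩ => not_lt.1 fun h => hmin s h c' hc')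

lemma completeMultipartiteGraph.exists_isIndepSet_card_eq {ι : Type*} {V : ι → Type*}
    [∀ i, Fintype (V i)] (i : ι) {k : ℕ} (hk : k ≤ Fintype.card (V i)) :
    ∃ S : Finset ((i : ι) × V i),
      S.card = k ∧ (completeMultipartiteGraph V).IsIndepSet S := by
  obtain ⟨S, hSpart, hS⟩ := Finset.exists_subset_card_eq
    (s := Finset.univ.map (Function.Embedding.sigmaMk i)) (by simpa using hk)
  refine ⟨S, hS, fun u hu v hv _ huv => huv ?_⟩
  obtain ⟨_, -, rfl⟩ := Finset.mem_map.1 (hSpart hu)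
  obtain ⟨_, -, rfl⟩ := Finset.mem_map.1 (hSpart hv)
  rfl

namespace SimpleGraph.Subgraph

variable {V : Type*} {G : SimpleGraph V}

def star (S : Set V) (x : V) (h : ∀ v ∈ S, G.Adj x v) : G.Subgraph where
  verts := insert x S
  Adj a b := a = x ∧ b ∈ S ∨ b = x ∧ a ∈ S
  adj_sub := by
    rintro a b (⟨rfl, hb⟩ | ⟨rfl, ha⟩)
    exacts [h b hb, (h a ha).symm]
  edge_vert := by
    rintro a b (⟨rfl, -⟩ | ⟨-, ha⟩)
    exacts [Set.mem_insert _ _, Set.mem_insert_of_mem _ ha]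
  symm := ⟨fun _ _ => Or.symm⟩

variable {S : Set V} {x : V} {h : ∀ v ∈ S, G.Adj x v}

lemma mem_star_edgeSet {e : Sym2 V} : e ∈ (star S x h).edgeSet ↔ ∃ v ∈ S, e = s(x, v) := by
  induction e with
  | h a b =>
    simp only [star, Subgraph.mem_edgeSet, Sym2.eq_iff]
    aesop

lemma star_coe_eq_starGraph (hx : x ∉ S) :
    (star S x h).coe = starGraph ⟨x, Set.mem_insert _ _⟩ := by
  ext ⟨a, ha⟩ ⟨b, hb⟩
  simp only [star, Set.mem_insert_iff] at ha hb
  simp only [coe_adj, star, starGraph_adj, ne_eq, Subtype.ext_iff]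
  grind

lemma isTree_star_coe (hx : x ∉ S) : (star S x h).coe.IsTree := by
  rw [star_coe_eq_starGraph hx]
  exact isTree_starGraph _

end SimpleGraph.Subgraph

section RainbowStars

variable {V β : Type*} {G : SimpleGraph V} {c : Sym2 V → β} {S : Set V}

structure IsRainbowStarCenter (G : SimpleGraph V) (c : Sym2 V → β) (S : Set V) (x : V) :
    Prop where
  notMem : x ∉ S
  adj : ∀ v ∈ S, G.Adj x v
  injOn : Set.InjOn (fun v => c s(x, v)) S

lemma IsRainbowStarCenter.isRainbowSTree {x : V} (hx : IsRainbowStarCenter G c S x) :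
    IsRainbowSTree G c S (Subgraph.star S x hx.adj) := by
  refine ⟨Set.subset_insert _ _, Subgraph.isTree_star_coe hx.notMem, ?_⟩
  rintro _ he₁ _ he₂ hc
  obtain ⟨v, hv, rfl⟩ := Subgraph.mem_star_edgeSet.1 he₁
  obtain ⟨w, hw, rfl⟩ := Subgraph.mem_star_edgeSet.1 he₂
  rw [hx.injOn hv hw hc]

lemma hasRainbowSTrees_of_exists_rainbowStarCenters {k ℓ : ℕ}
    (h : ∀ S : Finset V, S.card = k → ∃ X : Fin ℓ → V,
      Function.Injective X ∧ ∀ i, IsRainbowStarCenter G c S (X i)) :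
    HasRainbowSTrees G c k ℓ := by
  intro S hS
  obtain ⟨X, hXinj, hX⟩ := h S hS
  refine ⟨fun i => Subgraph.star S (X i) (hX i).adj, fun i => (hX i).isRainbowSTree,
    fun i j hij => ⟨?_, ?_⟩⟩
  · refine Set.eq_empty_of_forall_notMem fun e ⟨he₁, he₂⟩ => ?_
    obtain ⟨v, hv, rfl⟩ := Subgraph.mem_star_edgeSet.1 he₁
    obtain ⟨w, -, he⟩ := Subgraph.mem_star_edgeSet.1 he₂
    rcases Sym2.eq_iff.1 he with ⟨hXij, -⟩ | ⟨-, rfl⟩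
    · exact hij (hXinj hXij)
    · exact (hX j).notMem hv
  · ext a
    simp only [Subgraph.star, Set.mem_inter_iff, Set.mem_insert_iff]
    have := hXinj.ne hij
    have := (hX i).notMem
    have := (hX j).notMem
    grind

end RainbowStars

namespace Nat

lemma exists_lt_testBit_ne {a b B : ℕ} (ha : a < 2 ^ B) (hb : b < 2 ^ B) (hab : a ≠ b) :
    ∃ i < B, a.testBit i ≠ b.testBit i := by
  obtain ⟨i, hi⟩ := exists_testBit_ne_of_ne hab
  refine ⟨i, not_le.1 fun hBi => hi ?_, hi⟩
  have hpow := Nat.pow_le_pow_right two_pos hBi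
  rw [testBit_lt_two_pow (ha.trans_le hpow), testBit_lt_two_pow (hb.trans_le hpow)]

lemma testBit_two_pow_mul_eq_false {y L c w : ℕ} (hy : y < 2 ^ L) (hw : w / L ≠ c) :
    (2 ^ (c * L) * y).testBit w = false := by
  rw [testBit_two_pow_mul]
  rcases lt_or_ge w (c * L) with hlt | hge
  · simp [not_le.2 hlt]
  · have : (c + 1) * L ≤ w := by
      by_contra! h
      exact hw (Nat.div_eq_of_lt_le (by linarith) (by linarith))
    have hpow : 2 ^ L ≤ 2 ^ (w - c * L) :=
      Nat.pow_le_pow_right two_pos (by rw [add_mul] at this; omega)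
    simp [testBit_lt_two_pow (hy.trans_le hpow)]

lemma exists_le_card_forall_div_ne (W : Finset ℕ) (L : ℕ) :
    ∃ c ≤ W.card, ∀ w ∈ W, w / L ≠ c := by
  obtain ⟨c, hc, hcW⟩ := Finset.exists_mem_notMem_of_card_lt_card
    (s := W.image (· / L)) (t := Finset.range (W.card + 1))
    (by simpa using Finset.card_image_le.trans_lt (Nat.lt_succ_self W.card))
  exact ⟨c, Nat.lt_succ_iff.1 (Finset.mem_range.1 hc),
    fun w hw hwc => hcW (Finset.mem_image.2 ⟨w, hw, hwc⟩)⟩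

end Nat

section OddPartCode

variable (α : Type*) [Fintype α] [Nonempty α]

/-- Every `a : α` is the value at `2 ^ s * (2 * m + 1)` for all `s` and infinitely many `m`, so
indices with a prescribed value can keep their nonzero bits inside any window. -/
noncomputable def ofOddPart (b : ℕ) : α :=
  (Fintype.equivFin α).symm
    ⟨ordCompl[2] b / 2 % Fintype.card α, Nat.mod_lt _ Fintype.card_pos⟩

variable {α}

lemma ofOddPart_two_pow_mul (a : α) (s i : ℕ) :
    ofOddPart α (2 ^ s * (2 * (Fintype.equivFin α a + Fintype.card α * i) + 1)) = a := by
  have hodd : ordCompl[2] (2 ^ s * (2 * (Fintype.equivFin α a + Fintype.card α * i) + 1)) =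
      2 * (Fintype.equivFin α a + Fintype.card α * i) + 1 :=
    Nat.ordCompl_pow_mul_of_not_dvd _ Nat.prime_two (by omega)
  rw [ofOddPart, Equiv.symm_apply_eq, Fin.ext_iff, Fin.val_mk, hodd]
  simp [Nat.mul_add_div two_pos, Nat.add_mul_mod_self_left, Nat.mod_eq_of_lt]

lemma exists_injective_ofOddPart_eq (a : α) (W : Finset ℕ) {L ℓ : ℕ}
    (hL : 2 * Fintype.card α * ℓ ≤ 2 ^ L) :
    ∃ x : Fin ℓ → ℕ, Function.Injective x ∧ ∀ i, ofOddPart α (x i) = a ∧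
      x i < 2 ^ ((W.card + 1) * L) ∧ ∀ w ∈ W, (x i).testBit w = false := by
  obtain ⟨c, hcW, hc⟩ := Nat.exists_le_card_forall_div_ne W L
  set K := Fintype.card α
  set y : Fin ℓ → ℕ := fun i => 2 * (Fintype.equivFin α a + K * i) + 1
  have hy : ∀ i, y i < 2 ^ L := fun i => by
    have hcode := (Fintype.equivFin α a).2
    have hiK : K * i + K ≤ K * ℓ := by nlinarith [i.2]
    calc y i < 2 * K * ℓ := by simp only [y]; nlinarith
      _ ≤ 2 ^ L := hL
  refine ⟨fun i => 2 ^ (c * L) * y i, fun i j hij => ?_,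
    fun i => ⟨ofOddPart_two_pow_mul a _ _, ?_,
      fun w hw => Nat.testBit_two_pow_mul_eq_false (hy i) (hc w hw)⟩⟩
  · have := Nat.eq_of_mul_eq_mul_left (by positivity) hij
    simp only [y] at this
    exact Fin.ext (Nat.eq_of_mul_eq_mul_left (show 0 < K from Fintype.card_pos) (by omega))
  · calc 2 ^ (c * L) * y i < 2 ^ (c * L) * 2 ^ L :=
          Nat.mul_lt_mul_of_pos_left (hy i) (by positivity)
      _ = 2 ^ ((c + 1) * L) := by ring
      _ ≤ 2 ^ ((W.card + 1) * L) := Nat.pow_le_pow_right two_pos (by gcongr)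

end OddPartCode

/-- `k²` bit positions are enough to separate `k` indices pairwise. -/
structure HashLabel (k r B : ℕ) where
  pos : Fin k × Fin k → Fin B
  table : Fin r → (Fin k × Fin k → Bool) → Fin k

namespace HashLabel

variable {k r B : ℕ}

def equivProd : HashLabel k r B ≃
    (Fin k × Fin k → Fin B) × (Fin r → (Fin k × Fin k → Bool) → Fin k) where
  toFun L := (L.pos, L.table)
  invFun p := ⟨p.1, p.2⟩

instance : Fintype (HashLabel k r B) := Fintype.ofEquiv _ equivProd.symm

instance [NeZero k] [NeZero B] : Nonempty (HashLabel k r B) := equivProd.nonempty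

lemma card_eq : Fintype.card (HashLabel k r B) = B ^ (k * k) * (k ^ 2 ^ (k * k)) ^ r := by
  simp [Fintype.card_congr equivProd]

def eval (L : HashLabel k r B) (j : Fin r) (b : ℕ) : Fin k :=
  L.table j fun s => b.testBit (L.pos s)

def positions (L : HashLabel k r B) : Finset ℕ :=
  Finset.univ.image fun s => (L.pos s : ℕ)

lemma card_positions_le (L : HashLabel k r B) : L.positions.card ≤ k * k := by
  simpa [positions] using (Finset.univ.card_image_le (f := fun s => (L.pos s : ℕ)))

lemma eval_of_forall_testBit_eq_false {L : HashLabel k r B} {b : ℕ}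
    (hb : ∀ w ∈ L.positions, b.testBit w = false) (j : Fin r) :
    L.eval j b = L.table j fun _ => false :=
  congrArg (L.table j) (funext fun s => hb _ (Finset.mem_image_of_mem _ (Finset.mem_univ s)))

lemma exists_injOn_eval_add [NeZero k] [NeZero B] {n : ℕ} (hn : n ≤ 2 ^ B)
    {S : Finset ((_ : Fin r) × Fin n)} (hS : S.card = k) (ν : (_ : Fin r) × Fin n → Fin k) :
    ∃ L : HashLabel k r B, Set.InjOn (fun v => L.eval v.1 v.2 + ν v) S := by
  classical
  set e : Fin k → (_ : Fin r) × Fin n := fun i => S.equivFin.symm (i.cast hS.symm)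
  have he : ∀ v ∈ S, ∃ i, e i = v :=
    fun v hv => ⟨(S.equivFin ⟨v, hv⟩).cast hS, by simp [e]⟩
  have : Nonempty ((_ : Fin r) × Fin n) := ⟨e 0⟩
  have hpos : ∀ p : Fin k × Fin k, ∃ w : Fin B, (e p.1).2 ≠ (e p.2).2 →
      ((e p.1).2 : ℕ).testBit w ≠ ((e p.2).2 : ℕ).testBit w := by
    intro p
    by_cases hp : (e p.1).2 = (e p.2).2
    · exact ⟨0, fun h => absurd hp h⟩
    · obtain ⟨w, hw, hne⟩ := Nat.exists_lt_testBit_ne ((e p.1).2.2.trans_le hn)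
        ((e p.2).2.2.trans_le hn) (Fin.val_injective.ne hp)
      exact ⟨⟨w, hw⟩, fun _ => hne⟩
  choose pos hpos using hpos
  set key : (_ : Fin r) × Fin n → Fin r × (Fin k × Fin k → Bool) :=
    fun v => (v.1, fun s => (v.2 : ℕ).testBit (pos s))
  have hkey : Set.InjOn key S := by
    intro a ha b hb hab
    obtain ⟨i, rfl⟩ := he a ha
    obtain ⟨j, rfl⟩ := he b hb
    simp only [key, Prod.mk.injEq] at hab
    by_contra hne
    have hne₂ : (e i).2 ≠ (e j).2 := fun h => hne (Sigma.ext hab.1 (heq_of_eq h))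
    exact hpos (i, j) hne₂ (congrFun hab.2 (i, j))
  set σ : (_ : Fin r) × Fin n → Fin k := Function.invFun e
  have hσ : ∀ v ∈ S, e (σ v) = v := fun v hv => Function.invFun_eq (he v hv)
  set pre := Function.invFunOn key S
  let L : HashLabel k r B := ⟨pos, fun j z => σ (pre (j, z)) - ν (pre (j, z))⟩
  refine ⟨L, fun a ha b hb hab => ?_⟩
  have heval : ∀ v ∈ S, L.eval v.1 v.2 + ν v = σ v := by
    intro v hv
    change σ (pre (key v)) - ν (pre (key v)) + ν v = σ v
    rw [show pre (key v) = v from hkey.leftInvOn_invFunOn hv, sub_add_cancel]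
  simp only [heval a ha, heval b hb] at hab
  rw [← hσ a ha, ← hσ b hb, hab]

end HashLabel

section HashColoring

variable (k r n : ℕ) [NeZero k]

noncomputable def indexLabel (b : ℕ) : HashLabel k r (Nat.log 2 n + 1) :=
  ofOddPart _ b

noncomputable def hashColoring : Sym2 ((_ : Fin r) × Fin n) → Fin k :=
  Sym2.lift ⟨fun u v =>
    (indexLabel k r n u.2).eval v.1 v.2 + (indexLabel k r n v.2).eval u.1 u.2,
    fun _ _ => add_comm _ _⟩

variable {k r n}

lemma exists_rainbowStarCenters_hashColoring {ℓ : ℕ} (hkr : k < r)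
    (hn : 2 * Fintype.card (HashLabel k r (Nat.log 2 n + 1)) * ℓ ≤
      2 ^ (Nat.log 2 n / (k * k * k + 1)))
    {S : Finset ((_ : Fin r) × Fin n)} (hS : S.card = k) :
    ∃ X : Fin ℓ → (_ : Fin r) × Fin n, Function.Injective X ∧ ∀ i,
      IsRainbowStarCenter (completeMultipartiteGraph fun _ : Fin r => Fin n) (hashColoring k r n)
        S (X i) := by
  classical
  obtain ⟨p, -, hp⟩ := Finset.exists_mem_notMem_of_card_lt_card (s := S.image Sigma.fst)
    (t := Finset.univ) (by simpa [hS] using Finset.card_image_le.trans_lt (hS ▸ hkr))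
  have hpS : ∀ v ∈ S, v.1 ≠ p := fun v hv h => hp (Finset.mem_image.2 ⟨v, hv, h⟩)
  set ν : (_ : Fin r) × Fin n → Fin k := fun v => (indexLabel k r n v.2).table p fun _ => false
  obtain ⟨L, hL⟩ :=
    HashLabel.exists_injOn_eval_add (Nat.lt_pow_succ_log_self one_lt_two n).le hS ν
  set W := S.biUnion fun v => (indexLabel k r n v.2).positions
  have hW : W.card ≤ k * k * k := by
    simpa [hS, mul_assoc] using
      Finset.card_biUnion_le_card_mul S _ _ fun v _ => (indexLabel k r n v.2).card_positions_le
  obtain ⟨x, hxinj, hx⟩ := exists_injective_ofOddPart_eq L W hn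
  have hn0 : n ≠ 0 := by
    obtain ⟨v, -⟩ := Finset.card_pos.1 (hS ▸ Nat.pos_of_ne_zero (NeZero.ne k))
    exact v.2.pos.ne'
  have hxn : ∀ i, x i < n := fun i => by
    calc x i < 2 ^ ((W.card + 1) * (Nat.log 2 n / (k * k * k + 1))) := (hx i).2.1
      _ ≤ 2 ^ Nat.log 2 n := Nat.pow_le_pow_right two_pos
          ((Nat.mul_le_mul_right _ (by omega)).trans (Nat.mul_div_le _ _))
      _ ≤ n := Nat.pow_log_le_self 2 hn0
  have hcol : ∀ i, ∀ v ∈ S,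
      hashColoring k r n s(⟨p, x i, hxn i⟩, v) = L.eval v.1 v.2 + ν v := by
    intro i v hv
    have hlabel : indexLabel k r n (x i) = L := (hx i).1
    have hbits : ∀ w ∈ (indexLabel k r n v.2).positions, (x i).testBit w = false :=
      fun w hw => (hx i).2.2 w (Finset.mem_biUnion.2 ⟨v, hv, hw⟩)
    simp only [hashColoring, Sym2.lift_mk, hlabel,
      HashLabel.eval_of_forall_testBit_eq_false hbits, ν]
  refine ⟨fun i => ⟨p, x i, hxn i⟩, fun i j hij => hxinj ?_, fun i => ⟨?_, ?_, ?_⟩⟩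
  · simpa using hij
  · exact fun h => hpS _ h rfl
  · exact fun v hv => (hpS v hv).symm
  · intro a ha b hb hab
    exact hL ha hb (by simpa only [hcol i a ha, hcol i b hb] using hab)

end HashColoring

open Filter

lemma eventually_mul_succ_pow_le_two_pow (A d : ℕ) :
    ∀ᶠ u in atTop, A * (u + 1) ^ d ≤ 2 ^ u := by
  have h := ((isLittleO_pow_const_const_pow_of_one_lt (R := ℝ) d one_lt_two).comp_tendsto
    (tendsto_add_atTop_nat 1)).bound (c := 1 / (2 * (A + 1))) (by positivity)
  filter_upwards [h] with u hu
  simp only [Function.comp_apply, norm_pow, Real.norm_natCast, Real.norm_ofNat] at hu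
  have : (A : ℝ) * (u + 1) ^ d ≤ 2 ^ u := by
    calc (A : ℝ) * (u + 1) ^ d ≤ (A + 1) * (u + 1) ^ d := by gcongr; linarith
      _ ≤ (A + 1) * (1 / (2 * (A + 1)) * 2 ^ (u + 1)) := by push_cast at hu; gcongr
      _ = 2 ^ u := by field_simp; ring
  exact_mod_cast this

lemma eventually_mul_succ_pow_le_two_pow_div (A d : ℕ) {m : ℕ} (hm : m ≠ 0) :
    ∀ᶠ t in atTop, A * (t + 1) ^ d ≤ 2 ^ (t / m) := by
  filter_upwards [(Nat.tendsto_div_const_atTop hm).eventually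
    (eventually_mul_succ_pow_le_two_pow (A * m ^ d) d)] with t ht
  calc A * (t + 1) ^ d ≤ A * (m * (t / m + 1)) ^ d := by
        gcongr; exact Nat.lt_mul_div_succ t (Nat.pos_of_ne_zero hm)
    _ = A * m ^ d * (t / m + 1) ^ d := by rw [mul_pow, mul_assoc]
    _ ≤ 2 ^ (t / m) := ht

lemma eventually_hasRainbowSTrees_hashColoring {k r : ℕ} [NeZero k] (hkr : k < r) (ℓ : ℕ) :
    ∀ᶠ n in atTop, HasRainbowSTrees (completeMultipartiteGraph fun _ : Fin r => Fin n)
      (hashColoring k r n) k ℓ := by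
  have hlog : Tendsto (Nat.log 2) atTop atTop :=
    Nat.log_monotone.tendsto_atTop_atTop fun t => ⟨2 ^ t, (Nat.log_pow one_lt_two t).ge⟩
  filter_upwards [hlog.eventually (eventually_mul_succ_pow_le_two_pow_div
    (2 * (k ^ 2 ^ (k * k)) ^ r * ℓ) (k * k) (m := k * k * k + 1) (by omega))] with n hn
  refine hasRainbowSTrees_of_exists_rainbowStarCenters fun S hS =>
    exists_rainbowStarCenters_hashColoring hkr ?_ hS
  rw [HashLabel.card_eq]
  linarith

theorem rx_multipartite_eq_k (k ℓ r : ℕ) (hk : 3 ≤ k) (hℓ : 1 ≤ ℓ) (hkr : k < r) :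
    ∃ N : ℕ, 0 < N ∧ ∀ n : ℕ, N ≤ n →
      rainbowIndex (completeMultipartiteGraph (fun _ : Fin r => Fin n)) k ℓ = k := by
  have : NeZero k := ⟨by omega⟩
  obtain ⟨N, hN⟩ := eventually_atTop.1 (eventually_hasRainbowSTrees_hashColoring hkr ℓ)
  refine ⟨max N k, by omega, fun n hn => ?_⟩
  obtain ⟨S, hS, hindep⟩ := completeMultipartiteGraph.exists_isIndepSet_card_eq
    (V := fun _ : Fin r => Fin n) ⟨0, by omega⟩ (by simpa using (le_max_right N k).trans hn)
  exact rainbowIndex_eq_of_hasRainbowSTrees (hN n (le_of_max_le_left hn)) fun t ht c =>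
    not_hasRainbowSTrees_of_isIndepSet c ht hℓ hS (by omega) hindep
end
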